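/- arXiv:2512.09528 — 2 statements merged into one kernel-verified Lean document; each statement's English description precedes it below -/
import Mathlib

section
/- In the Poincaré disk, let ε > 0 be sufficiently small, θ ∈ [−π, π], and ξ ∈ 𝔻 with R = d_P(0,ξ) sufficiently large. If e^{−R} ≥ 8 ε⁻¹ |sin(θ/2)|, then d_P(ξ, e^{iθ}ξ) ≤ ε; and if e^{−R} ≤ (1/4) ε⁻¹ |sin(θ/2)|, then d_P(ξ, e^{iθ}ξ) ≥ ε. -/
/-- The Poincaré (hyperbolic) distance on the open unit disk of `ℂ`. -/
noncomputable def poincareDist (a b : ℂ) : ℝ :=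
  Real.log ((1 + ‖a - b‖ / ‖1 - (starRingEnd ℂ) a * b‖) /
            (1 - ‖a - b‖ / ‖1 - (starRingEnd ℂ) a * b‖))

/-- The open unit disk in `ℂ`. -/
def unitDisc : Set ℂ := {z : ℂ | ‖z‖ < 1}

/-- A self-map of the unit disk which is an isometry for the Poincaré distance. -/
def IsDiscIsometry (φ : ℂ → ℂ) : Prop :=
  Set.MapsTo φ unitDisc unitDisc ∧
    ∀ a ∈ unitDisc, ∀ b ∈ unitDisc, poincareDist (φ a) (φ b) = poincareDist a b

/-- A set of self-maps of the disk forming a group of Poincaré isometries. -/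
def IsIsometryGroup (Γ : Set (ℂ → ℂ)) : Prop :=
  (∀ φ ∈ Γ, IsDiscIsometry φ) ∧ id ∈ Γ ∧ (∀ φ ∈ Γ, ∀ ψ ∈ Γ, φ ∘ ψ ∈ Γ) ∧
    ∀ φ ∈ Γ, ∃ ψ ∈ Γ, (∀ z ∈ unitDisc, ψ (φ z) = z) ∧ ∀ z ∈ unitDisc, φ (ψ z) = z

/-- Properly discontinuous action on the unit disk. -/
def ProperlyDiscontinuous (Γ : Set (ℂ → ℂ)) : Prop :=
  ∀ K : Set ℂ, K ⊆ unitDisc → IsCompact K → {φ : ℂ → ℂ | φ ∈ Γ ∧ (φ '' K ∩ K).Nonempty}.Finite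

/-!
Write `r = ‖ξ‖` and `s = |sin (θ / 2)|`. The pseudo-hyperbolic distance between `ξ` and `e^{iθ}ξ`
is `ρ = 2sr / √((1 - r²)² + (2sr)²)`, and `d_P = log ((1 + ρ) / (1 - ρ))` lies between `2ρ` and
`4ρ` for small `ρ`. Since `e^{-R} = (1 - r) / (1 + r)` is within a factor `4` of `1 - r²`, the
hypothesis `e^{-R} ≥ 8s/ε` gives `ρ ≤ 2s / (1 - r²) ≤ ε/4`, while `e^{-R} ≤ s/(4ε)` gives
`ε (1 - r²) ≤ s`, hence `ρ ≥ ε` as soon as `r² ≥ 1/3`, which `R ≥ log 7` guarantees.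
-/

noncomputable def pseudoHypDist (a b : ℂ) : ℝ :=
  ‖a - b‖ / ‖1 - (starRingEnd ℂ) a * b‖

theorem poincareDist_eq_log_pseudoHypDist (a b : ℂ) :
    poincareDist a b = Real.log ((1 + pseudoHypDist a b) / (1 - pseudoHypDist a b)) :=
  rfl

theorem log_one_add_div_one_sub_le {x : ℝ} (h₀ : 0 ≤ x) (h : x ≤ 1 / 2) :
    Real.log ((1 + x) / (1 - x)) ≤ 4 * x := by
  have hlog := Real.log_div_le_sum_range_add h₀ (by linarith) 0
  simp only [Finset.range_zero, Finset.sum_empty, zero_add, mul_zero, pow_one] at hlog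
  have hx : x / (1 - x ^ 2) ≤ 2 * x := by
    rw [div_le_iff₀ (by nlinarith)]
    nlinarith
  linarith

theorem two_mul_le_log_one_add_div_one_sub {x : ℝ} (h₀ : 0 ≤ x) (h : x < 1) :
    2 * x ≤ Real.log ((1 + x) / (1 - x)) := by
  have hlog := Real.sum_range_le_log_div h₀ h 1
  simp only [Finset.sum_range_one, mul_zero, zero_add, pow_one, CharP.cast_eq_zero,
    div_one] at hlog
  linarith

theorem poincareDist_zero_left (ξ : ℂ) :
    poincareDist 0 ξ = Real.log ((1 + ‖ξ‖) / (1 - ‖ξ‖)) := by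
  simp [poincareDist]

theorem exp_neg_poincareDist_zero_left {ξ : ℂ} (hξ : ξ ∈ unitDisc) :
    Real.exp (-poincareDist 0 ξ) = (1 - ‖ξ‖) / (1 + ‖ξ‖) := by
  have hξ : ‖ξ‖ < 1 := hξ
  have hpos : 0 < (1 + ‖ξ‖) / (1 - ‖ξ‖) := div_pos (by positivity) (by linarith)
  rw [poincareDist_zero_left, Real.exp_neg, Real.exp_log hpos, inv_div]

theorem three_quarters_le_norm_of_log_seven_le {ξ : ℂ} (hξ : ξ ∈ unitDisc)
    (hR : Real.log 7 ≤ poincareDist 0 ξ) : 3 / 4 ≤ ‖ξ‖ := by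
  have h : (1 - ‖ξ‖) / (1 + ‖ξ‖) ≤ 7⁻¹ := by
    rw [← exp_neg_poincareDist_zero_left hξ, ← Real.exp_log (by norm_num : (0:ℝ) < 7),
      ← Real.exp_neg, Real.exp_le_exp]
    linarith
  rw [div_le_iff₀ (by positivity)] at h
  linarith

theorem norm_one_sub_exp_ofReal_mul_I (θ : ℝ) :
    ‖1 - Complex.exp (θ * Complex.I)‖ = 2 * |Real.sin (θ / 2)| := by
  rw [norm_sub_rev, mul_comm, Complex.norm_exp_I_mul_ofReal_sub_one, norm_mul,
    Real.norm_eq_abs, Real.norm_eq_abs, abs_two]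

theorem conj_mul_exp_ofReal_mul_I_mul (θ : ℝ) (ξ : ℂ) :
    (starRingEnd ℂ) ξ * (Complex.exp (θ * Complex.I) * ξ) =
      ((‖ξ‖ ^ 2 : ℝ) : ℂ) * Complex.exp (θ * Complex.I) := by
  rw [mul_left_comm, Complex.conj_mul', Complex.ofReal_pow, mul_comm]

theorem norm_one_sub_ofReal_mul_exp_ofReal_mul_I (t θ : ℝ) :
    ‖1 - t * Complex.exp (θ * Complex.I)‖ =
      √((1 - t) ^ 2 + (2 * |Real.sin (θ / 2)|) ^ 2 * t) := by
  have hcos : Real.cos θ = 1 - 2 * Real.sin (θ / 2) ^ 2 := by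
    rw [← Real.cos_two_mul_eq_one_sub, mul_div_cancel₀ θ two_ne_zero]
  rw [Complex.norm_def, Complex.normSq_apply]
  congr 1
  simp [Complex.exp_ofReal_mul_I_re, Complex.exp_ofReal_mul_I_im]
  rw [mul_pow, sq_abs]
  linear_combination (t ^ 2) * Real.sin_sq_add_cos_sq θ - 2 * t * hcos

noncomputable def rotationRatio (r s : ℝ) : ℝ :=
  2 * s * r / √((1 - r ^ 2) ^ 2 + (2 * s * r) ^ 2)

theorem pseudoHypDist_rotation (θ : ℝ) (ξ : ℂ) :
    pseudoHypDist ξ (Complex.exp (θ * Complex.I) * ξ) =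
      rotationRatio ‖ξ‖ |Real.sin (θ / 2)| := by
  rw [pseudoHypDist, rotationRatio, conj_mul_exp_ofReal_mul_I_mul,
    norm_one_sub_ofReal_mul_exp_ofReal_mul_I, ← one_sub_mul, norm_mul, norm_one_sub_exp_ofReal_mul_I]
  ring_nf

section rotationRatio

variable {r s ε : ℝ}

theorem rotationRatio_nonneg (hr : 0 ≤ r) (hs : 0 ≤ s) : 0 ≤ rotationRatio r s := by
  unfold rotationRatio
  positivity

theorem rotationRatio_lt_one (hr₀ : 0 ≤ r) (hr₁ : r < 1) : rotationRatio r s < 1 := by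
  have ht : 0 < 1 - r ^ 2 := by nlinarith
  rw [rotationRatio, div_lt_one (by positivity)]
  exact Real.lt_sqrt_of_sq_lt (by nlinarith)

theorem rotationRatio_le_of_le (hr₀ : 0 ≤ r) (hr₁ : r < 1) (hs : 0 ≤ s) (hε : 0 < ε)
    (h : 8 * ε⁻¹ * s ≤ (1 - r) / (1 + r)) : rotationRatio r s ≤ ε / 4 := by
  have ht : 0 < 1 - r ^ 2 := by nlinarith
  have hq : (1 - r) / (1 + r) ≤ 1 - r ^ 2 := by
    rw [div_le_iff₀ (by linarith)]
    nlinarith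
  have h8s : 8 * s ≤ ε * (1 - r ^ 2) := by
    rw [mul_right_comm, ← div_eq_mul_inv, div_le_iff₀' hε] at h
    nlinarith
  calc rotationRatio r s ≤ 2 * s * r / (1 - r ^ 2) := by
        unfold rotationRatio
        gcongr
        exact Real.le_sqrt_of_sq_le (by nlinarith [sq_nonneg (2 * s * r)])
    _ ≤ ε / 4 := by
        rw [div_le_iff₀ ht]
        nlinarith

theorem le_rotationRatio_of_le (hr : 3 / 4 ≤ r) (hr₁ : r < 1) (hs : 0 ≤ s) (hε : 0 < ε)
    (hε₁ : ε ≤ 1 / 2) (h : (1 - r) / (1 + r) ≤ 1 / 4 * ε⁻¹ * s) : ε ≤ rotationRatio r s := by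
  have ht : 0 < 1 - r ^ 2 := by nlinarith
  have hq : 1 - r ^ 2 ≤ 4 * ((1 - r) / (1 + r)) := by
    rw [mul_div_assoc', le_div_iff₀ (by linarith)]
    nlinarith
  have hεt : ε * (1 - r ^ 2) ≤ s := by
    rw [show 1 / 4 * ε⁻¹ * s = s / (4 * ε) by field_simp, le_div_iff₀ (by positivity)] at h
    nlinarith
  have hεt2 : (ε * (1 - r ^ 2)) ^ 2 ≤ s ^ 2 := pow_le_pow_left₀ (by positivity) hεt 2
  rw [rotationRatio, le_div_iff₀ (Real.sqrt_pos.mpr (by positivity)), ← Real.sqrt_sq hε.le,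
    ← Real.sqrt_mul (sq_nonneg ε), Real.sqrt_le_left (by positivity)]
  nlinarith [mul_le_mul_of_nonneg_left (show ε ^ 2 ≤ 1 / 4 by nlinarith) (sq_nonneg (2 * s * r)),
    mul_le_mul_of_nonneg_left (show 1 / 3 ≤ r ^ 2 by nlinarith) (sq_nonneg s)]

end rotationRatio

/-- for sufficiently small `ε` and `ξ` with `R = d_P(0,ξ)` sufficiently
large: if `e^{−R} ≥ 8 ε⁻¹|sin(θ/2)|` then `d_P(ξ, e^{iθ}ξ) ≤ ε`, and if
`e^{−R} ≤ (1/4) ε⁻¹|sin(θ/2)|` then `d_P(ξ, e^{iθ}ξ) ≥ ε`. -/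
theorem stmt14 :
    ∃ ε₀ : ℝ, 0 < ε₀ ∧ ∀ ε : ℝ, 0 < ε → ε < ε₀ → ∃ R₀ : ℝ,
      ∀ θ ∈ Set.Icc (-Real.pi) Real.pi, ∀ ξ ∈ unitDisc, R₀ ≤ poincareDist 0 ξ →
        (Real.exp (-poincareDist 0 ξ) ≥ 8 * ε⁻¹ * |Real.sin (θ / 2)| →
          poincareDist ξ (Complex.exp (θ * Complex.I) * ξ) ≤ ε) ∧
        (Real.exp (-poincareDist 0 ξ) ≤ (1 / 4) * ε⁻¹ * |Real.sin (θ / 2)| →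
          ε ≤ poincareDist ξ (Complex.exp (θ * Complex.I) * ξ)) := by
  refine ⟨1 / 2, by norm_num, fun ε hε hε₁ => ⟨Real.log 7, fun θ _ ξ hξ hR => ?_⟩⟩
  have hr : 3 / 4 ≤ ‖ξ‖ := three_quarters_le_norm_of_log_seven_le hξ hR
  have hξ' : ‖ξ‖ < 1 := hξ
  have hs : 0 ≤ |Real.sin (θ / 2)| := abs_nonneg _
  have hρ₀ := rotationRatio_nonneg (norm_nonneg ξ) hs
  rw [exp_neg_poincareDist_zero_left hξ, poincareDist_eq_log_pseudoHypDist,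
    pseudoHypDist_rotation]
  constructor
  · intro h
    have hρ := rotationRatio_le_of_le (norm_nonneg ξ) hξ' hs hε h
    linarith [log_one_add_div_one_sub_le hρ₀ (by linarith)]
  · intro h
    have hρ := le_rotationRatio_of_le hr hξ' hs hε hε₁.le h
    linarith [two_mul_le_log_one_add_div_one_sub hρ₀ (rotationRatio_lt_one (norm_nonneg ξ) hξ')]
end

section
/- Let 𝔻 be the Poincaré disk and for R > 0 let 𝔻_R = {ξ : d_P(0,ξ) < R}. Suppose τ_a, τ_b ∈ Aut(𝔻) with τ_a(0) = a, τ_b(0) = b. If sup_{ξ ∈ closure(𝔻_R)} d_P(τ_a(ξ), τ_b(ξ)) ≤ ε, then d_P(a,b) ≤ ε. Conversely, there is a constant A > 1 (depending only on ε, for ε sufficiently small) such that: if d_P(a,b) ≤ A⁻¹ e^{−R}, then there exist automorphisms τ_a, τ_b of 𝔻 with τ_a(0) = a, τ_b(0) = b and sup_{ξ ∈ closure(𝔻_R)} d_P(τ_a(ξ), τ_b(ξ)) ≤ ε. -/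
/-- A holomorphic automorphism of the unit disk. -/
def IsDiscAut (τ : ℂ → ℂ) : Prop :=
  DifferentiableOn ℂ τ unitDisc ∧ Set.BijOn τ unitDisc unitDisc

/-!
Evaluating at `ξ = 0` gives the first assertion. For the converse let
`φ_a z = (z + a) / (1 + ā z)` and take `τ_a = φ_a`, `τ_b = φ_a ∘ φ_c` with `c = φ_{-a}(b)`.
As `φ_a` is a Poincaré isometry, `d_P(τ_a ξ, τ_b ξ) = d_P(ξ, φ_c ξ)`, and
`|c| ≤ d_P(0, c) = d_P(a, b)`. The pseudo-hyperbolic distance from `ξ` to `φ_c ξ` is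
`|c̄ ξ² - c| / |1 - |ξ|² + c̄ ξ - ξ̄ c|`, of order `|c| / (1 - |ξ|)`, and `1 - |ξ| ≥ e^{-R}` on
the closed hyperbolic disk of radius `R`; so `d_P(a, b) ≤ A⁻¹ e^{-R}` makes the displacement
`O(A⁻¹)`.
-/
open ComplexConjugate

noncomputable def pseudoDist (a b : ℂ) : ℝ := ‖a - b‖ / ‖1 - conj a * b‖

lemma poincareDist_eq_log_pseudoDist (a b : ℂ) :
    poincareDist a b = Real.log ((1 + pseudoDist a b) / (1 - pseudoDist a b)) := rfl

lemma pseudoDist_nonneg (a b : ℂ) : 0 ≤ pseudoDist a b := by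
  unfold pseudoDist; positivity

lemma pseudoDist_zero_left (z : ℂ) : pseudoDist 0 z = ‖z‖ := by
  simp [pseudoDist]

lemma poincareDist_self (a : ℂ) : poincareDist a a = 0 := by
  simp [poincareDist]

lemma normSq_one_sub_conj_mul_sub_normSq_sub (a b : ℂ) :
    Complex.normSq (1 - conj a * b) - Complex.normSq (a - b)
      = (1 - Complex.normSq a) * (1 - Complex.normSq b) := by
  simp only [Complex.normSq_apply, Complex.sub_re, Complex.sub_im, Complex.mul_re,
    Complex.mul_im, Complex.one_re, Complex.one_im, Complex.conj_re, Complex.conj_im]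
  ring

lemma norm_sub_lt_norm_one_sub_conj_mul {a b : ℂ} (ha : ‖a‖ < 1) (hb : ‖b‖ < 1) :
    ‖a - b‖ < ‖1 - conj a * b‖ := by
  have key := normSq_one_sub_conj_mul_sub_normSq_sub a b
  rw [Complex.normSq_eq_norm_sq, Complex.normSq_eq_norm_sq, Complex.normSq_eq_norm_sq,
    Complex.normSq_eq_norm_sq] at key
  have hpos : 0 < (1 - ‖a‖ ^ 2) * (1 - ‖b‖ ^ 2) := by
    apply mul_pos <;> nlinarith [norm_nonneg a, norm_nonneg b]
  exact lt_of_pow_lt_pow_left₀ 2 (norm_nonneg _) (by linarith)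

lemma pseudoDist_lt_one {a b : ℂ} (ha : ‖a‖ < 1) (hb : ‖b‖ < 1) : pseudoDist a b < 1 := by
  have h := norm_sub_lt_norm_one_sub_conj_mul ha hb
  exact (div_lt_one ((norm_nonneg _).trans_lt h)).mpr h

lemma le_log_one_add_div_one_sub {t : ℝ} (h0 : 0 ≤ t) (h1 : t < 1) :
    t ≤ Real.log ((1 + t) / (1 - t)) := by
  rw [Real.le_log_iff_exp_le (by apply div_pos <;> linarith)]
  calc Real.exp t ≤ 1 / (1 - t) := Real.exp_bound_div_one_sub_of_interval h0 h1
    _ ≤ (1 + t) / (1 - t) := by gcongr; linarith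

lemma log_one_add_div_one_sub_le_s17 {t r : ℝ} (h0 : 0 ≤ t) (htr : t ≤ r) (hr : r < 1) :
    Real.log ((1 + t) / (1 - t)) ≤ 2 * r / (1 - r) :=
  calc Real.log ((1 + t) / (1 - t)) ≤ (1 + t) / (1 - t) - 1 :=
        Real.log_le_sub_one_of_pos (by apply div_pos <;> linarith)
    _ = 2 * t / (1 - t) := by field_simp [show 1 - t ≠ 0 by linarith]; ring
    _ ≤ 2 * r / (1 - r) := by gcongr; linarith

lemma pseudoDist_le_poincareDist {a b : ℂ} (ha : ‖a‖ < 1) (hb : ‖b‖ < 1) :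
    pseudoDist a b ≤ poincareDist a b :=
  le_log_one_add_div_one_sub (pseudoDist_nonneg a b) (pseudoDist_lt_one ha hb)

lemma poincareDist_le_of_pseudoDist_le {a b : ℂ} {r : ℝ} (h : pseudoDist a b ≤ r) (hr : r < 1) :
    poincareDist a b ≤ 2 * r / (1 - r) :=
  log_one_add_div_one_sub_le_s17 (pseudoDist_nonneg a b) h hr

lemma exp_neg_le_one_sub_norm {ξ : ℂ} {R : ℝ} (hξ : ‖ξ‖ < 1) (h : poincareDist 0 ξ ≤ R) :
    Real.exp (-R) ≤ 1 - ‖ξ‖ := by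
  rw [poincareDist_eq_log_pseudoDist, pseudoDist_zero_left,
    Real.log_le_iff_le_exp (div_pos (by linarith [norm_nonneg ξ]) (by linarith)),
    div_le_iff₀ (by linarith)] at h
  have hR : Real.exp (-R) * Real.exp R = 1 := by rw [← Real.exp_add]; simp
  nlinarith [mul_le_mul_of_nonneg_left h (Real.exp_pos (-R)).le, Real.exp_pos (-R), norm_nonneg ξ]

noncomputable def mobius (a z : ℂ) : ℂ := (z + a) / (1 + conj a * z)

lemma mobius_zero (a : ℂ) : mobius a 0 = a := by simp [mobius]

lemma mobius_neg_self (a : ℂ) : mobius (-a) a = 0 := by simp [mobius]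

lemma one_add_conj_mul_ne_zero {a z : ℂ} (ha : ‖a‖ < 1) (hz : ‖z‖ < 1) :
    1 + conj a * z ≠ 0 := by
  intro h
  have h1 : ‖conj a * z‖ = 1 := by rw [eq_neg_of_add_eq_zero_right h, norm_neg, norm_one]
  rw [norm_mul, Complex.norm_conj] at h1
  nlinarith [norm_nonneg a, norm_nonneg z]

lemma norm_mobius_lt_one {a z : ℂ} (ha : ‖a‖ < 1) (hz : ‖z‖ < 1) : ‖mobius a z‖ < 1 := by
  have h := norm_sub_lt_norm_one_sub_conj_mul ha (norm_neg z ▸ hz : ‖-z‖ < 1)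
  rw [sub_neg_eq_add, add_comm, mul_neg, sub_neg_eq_add] at h
  rwa [mobius, norm_div, div_lt_one ((norm_nonneg _).trans_lt h)]

lemma mobius_neg_mobius {a z : ℂ} (ha : ‖a‖ < 1) (hz : ‖z‖ < 1) :
    mobius (-a) (mobius a z) = z := by
  have hd := one_add_conj_mul_ne_zero ha hz
  have hd' := one_add_conj_mul_ne_zero (norm_neg a ▸ ha : ‖-a‖ < 1) (norm_mobius_lt_one ha hz)
  simp only [mobius, map_neg] at hd' ⊢
  field_simp at hd' ⊢
  rw [div_eq_iff (div_ne_zero_iff.mp hd').1]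
  ring

lemma mobius_mobius_neg {a z : ℂ} (ha : ‖a‖ < 1) (hz : ‖z‖ < 1) :
    mobius a (mobius (-a) z) = z := by
  simpa using mobius_neg_mobius (norm_neg a ▸ ha : ‖-a‖ < 1) hz

lemma isDiscAut_mobius {a : ℂ} (ha : ‖a‖ < 1) : IsDiscAut (mobius a) := by
  refine ⟨?_, Set.InvOn.bijOn (f' := mobius (-a))
    ⟨fun z hz => mobius_neg_mobius ha hz, fun z hz => mobius_mobius_neg ha hz⟩
    (fun z hz => norm_mobius_lt_one ha hz)
    (fun z hz => norm_mobius_lt_one (norm_neg a ▸ ha : ‖-a‖ < 1) hz)⟩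
  exact DifferentiableOn.div (by fun_prop) (by fun_prop)
    fun z hz => one_add_conj_mul_ne_zero ha hz

lemma IsDiscAut.comp {σ τ : ℂ → ℂ} (hσ : IsDiscAut σ) (hτ : IsDiscAut τ) : IsDiscAut (σ ∘ τ) :=
  ⟨hσ.1.comp hτ.1 hτ.2.mapsTo, hσ.2.comp hτ.2⟩

lemma pseudoDist_mobius {a z w : ℂ} (ha : ‖a‖ < 1) (hz : ‖z‖ < 1) (hw : ‖w‖ < 1) :
    pseudoDist (mobius a z) (mobius a w) = pseudoDist z w := by
  have hdz := one_add_conj_mul_ne_zero ha hz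
  have hdw := one_add_conj_mul_ne_zero ha hw
  have hdz' : conj (1 + conj a * z) ≠ 0 := (map_ne_zero _).mpr hdz
  have hk : (1 - conj a * a : ℂ) ≠ 0 := by
    rw [Complex.conj_mul', sub_ne_zero]
    exact_mod_cast (pow_lt_one₀ (norm_nonneg a) ha two_ne_zero).ne'
  have hsub : mobius a z - mobius a w
      = (1 - conj a * a) * (z - w) / ((1 + conj a * z) * (1 + conj a * w)) := by
    rw [mobius, mobius, div_sub_div _ _ hdz hdw]; ring
  have hone : 1 - conj (mobius a z) * mobius a w
      = (1 - conj a * a) * (1 - conj z * w) / (conj (1 + conj a * z) * (1 + conj a * w)) := by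
    rw [mobius, mobius, map_div₀, div_mul_div_comm, one_sub_div (mul_ne_zero hdz' hdw)]
    simp only [map_add, map_mul, map_one, Complex.conj_conj]
    ring
  rw [pseudoDist, pseudoDist, hsub, hone, norm_div, norm_div, norm_mul, norm_mul, norm_mul,
    norm_mul, Complex.norm_conj, div_div_div_cancel_right₀ (by simp [hdz, hdw]),
    mul_div_mul_left _ _ (norm_ne_zero_iff.mpr hk)]

lemma poincareDist_mobius {a z w : ℂ} (ha : ‖a‖ < 1) (hz : ‖z‖ < 1) (hw : ‖w‖ < 1) :
    poincareDist (mobius a z) (mobius a w) = poincareDist z w := by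
  simp only [poincareDist_eq_log_pseudoDist, pseudoDist_mobius ha hz hw]

lemma norm_mobius_neg_le_poincareDist {a b : ℂ} (ha : ‖a‖ < 1) (hb : ‖b‖ < 1) :
    ‖mobius (-a) b‖ ≤ poincareDist a b := by
  have ha' : ‖-a‖ < 1 := norm_neg a ▸ ha
  calc ‖mobius (-a) b‖ = pseudoDist 0 (mobius (-a) b) := (pseudoDist_zero_left _).symm
    _ ≤ poincareDist 0 (mobius (-a) b) :=
      pseudoDist_le_poincareDist (by simp) (norm_mobius_lt_one ha' hb)
    _ = poincareDist a b := by rw [← mobius_neg_self a, poincareDist_mobius ha' ha hb]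

lemma pseudoDist_self_mobius_le {c ξ : ℂ} {δ : ℝ} (hξ : ‖ξ‖ < 1) (hc : ‖c‖ ≤ δ * (1 - ‖ξ‖))
    (hδ : δ < 1 / 2) : pseudoDist ξ (mobius c ξ) ≤ 2 * δ / (1 - 2 * δ) := by
  have hξ0 := norm_nonneg ξ
  have hc1 : ‖c‖ < 1 := by nlinarith [norm_nonneg c]
  have hd := one_add_conj_mul_ne_zero hc1 hξ
  have hsub : ξ - mobius c ξ = (conj c * ξ ^ 2 - c) / (1 + conj c * ξ) := by
    rw [mobius, eq_div_iff hd, sub_mul, div_mul_cancel₀ _ hd]; ring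
  have hone : 1 - conj ξ * mobius c ξ
      = ((1 - conj ξ * ξ) + (conj c * ξ - conj ξ * c)) / (1 + conj c * ξ) := by
    rw [mobius, eq_div_iff hd, sub_mul, mul_assoc, div_mul_cancel₀ _ hd]; ring
  have hnum : ‖conj c * ξ ^ 2 - c‖ ≤ 2 * δ * (1 - ‖ξ‖) := by
    have := norm_sub_le (conj c * ξ ^ 2) c
    rw [norm_mul, norm_pow, Complex.norm_conj] at this
    nlinarith [norm_nonneg c, pow_le_one₀ (n := 2) hξ0 hξ.le]
  have hden : (1 - 2 * δ) * (1 - ‖ξ‖) ≤ ‖(1 - conj ξ * ξ) + (conj c * ξ - conj ξ * c)‖ := by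
    have hX : ‖1 - conj ξ * ξ‖ = 1 - ‖ξ‖ ^ 2 := by
      rw [Complex.conj_mul', ← Complex.ofReal_pow, ← Complex.ofReal_one, ← Complex.ofReal_sub,
        Complex.norm_real, Real.norm_of_nonneg (by nlinarith)]
    have hY := norm_sub_le (conj c * ξ) (conj ξ * c)
    rw [norm_mul, norm_mul, Complex.norm_conj, Complex.norm_conj] at hY
    have := norm_sub_norm_le (1 - conj ξ * ξ) (-(conj c * ξ - conj ξ * c))
    rw [sub_neg_eq_add, norm_neg, hX] at this
    nlinarith [norm_nonneg c]
  have hpos : 0 < (1 - 2 * δ) * (1 - ‖ξ‖) := mul_pos (by linarith) (by linarith)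
  calc pseudoDist ξ (mobius c ξ)
      = ‖conj c * ξ ^ 2 - c‖ / ‖(1 - conj ξ * ξ) + (conj c * ξ - conj ξ * c)‖ := by
        rw [pseudoDist, hsub, hone, norm_div, norm_div,
          div_div_div_cancel_right₀ (norm_ne_zero_iff.mpr hd)]
    _ ≤ 2 * δ * (1 - ‖ξ‖) / ((1 - 2 * δ) * (1 - ‖ξ‖)) :=
        div_le_div₀ ((norm_nonneg _).trans hnum) hnum hpos hden
    _ = 2 * δ / (1 - 2 * δ) := mul_div_mul_right _ _ (by linarith)

lemma poincareDist_self_mobius_le {c ξ : ℂ} {δ : ℝ} (hξ : ‖ξ‖ < 1)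
    (hc : ‖c‖ ≤ δ * (1 - ‖ξ‖)) (hδ : δ ≤ 1 / 10) : poincareDist ξ (mobius c ξ) ≤ 10 * δ := by
  have hδ0 : 0 ≤ δ := by nlinarith [norm_nonneg c]
  have hρ : pseudoDist ξ (mobius c ξ) ≤ 5 / 2 * δ :=
    (pseudoDist_self_mobius_le hξ hc (by linarith)).trans
      (by rw [div_le_iff₀ (by linarith)]; nlinarith)
  calc poincareDist ξ (mobius c ξ) ≤ 2 * (5 / 2 * δ) / (1 - 5 / 2 * δ) :=
        poincareDist_le_of_pseudoDist_le hρ (by linarith)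
    _ ≤ 10 * δ := by rw [div_le_iff₀ (by linarith)]; nlinarith

/-- two automorphisms close on a large hyperbolic disk have close values
at `0`; conversely (Dinh–Nguyên–Sibony), if `d_P(a,b) ≤ A⁻¹e^{−R}` one can choose
automorphisms sending `0` to `a` resp. `b` which are `ε`-close on the hyperbolic disk of
radius `R`. -/
theorem stmt17 :
    (∀ (ε R : ℝ), 0 < ε → 0 < R → ∀ a ∈ unitDisc, ∀ b ∈ unitDisc,
      ∀ τa τb : ℂ → ℂ, IsDiscAut τa → IsDiscAut τb → τa 0 = a → τb 0 = b →
        (∀ ξ ∈ unitDisc, poincareDist 0 ξ ≤ R → poincareDist (τa ξ) (τb ξ) ≤ ε) →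
        poincareDist a b ≤ ε) ∧
    ∃ ε₀ : ℝ, 0 < ε₀ ∧ ∀ ε : ℝ, 0 < ε → ε < ε₀ → ∃ A : ℝ, 1 < A ∧
      ∀ R : ℝ, 0 < R → ∀ a ∈ unitDisc, ∀ b ∈ unitDisc,
        poincareDist a b ≤ A⁻¹ * Real.exp (-R) →
        ∃ τa τb : ℂ → ℂ, IsDiscAut τa ∧ IsDiscAut τb ∧ τa 0 = a ∧ τb 0 = b ∧
          ∀ ξ ∈ unitDisc, poincareDist 0 ξ ≤ R → poincareDist (τa ξ) (τb ξ) ≤ ε := by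
  refine ⟨fun ε R _ hR a _ b _ τa τb _ _ hτa hτb hclose => ?_, 1, one_pos, fun ε hε hε1 =>
    ⟨10 / ε, by rw [lt_div_iff₀ hε]; linarith, fun R _ a ha b hb hab => ?_⟩⟩
  · simpa [hτa, hτb, poincareDist_self] using
      hclose 0 (by simp [unitDisc]) (by simp [poincareDist_self, hR.le])
  · set c := mobius (-a) b
    have hc : ‖c‖ < 1 := norm_mobius_lt_one (norm_neg a ▸ ha : ‖-a‖ < 1) hb
    refine ⟨mobius a, mobius a ∘ mobius c, isDiscAut_mobius ha,
      (isDiscAut_mobius ha).comp (isDiscAut_mobius hc), mobius_zero a,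
      by rw [Function.comp_apply, mobius_zero, mobius_mobius_neg ha hb], fun ξ hξ hξR => ?_⟩
    have hcξ : ‖c‖ ≤ ε / 10 * (1 - ‖ξ‖) :=
      calc ‖c‖ ≤ poincareDist a b := norm_mobius_neg_le_poincareDist ha hb
        _ ≤ (10 / ε)⁻¹ * Real.exp (-R) := hab
        _ ≤ ε / 10 * (1 - ‖ξ‖) := by
          rw [inv_div]; gcongr; exact exp_neg_le_one_sub_norm hξ hξR
    rw [Function.comp_apply, poincareDist_mobius ha hξ (norm_mobius_lt_one hc hξ)]
    linarith [poincareDist_self_mobius_le hξ hcξ (by linarith)]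
end
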